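/- Let I be an ideal of R generated by multiplication terms, and let C = T_1 + ... + T_k be a ΣΠΣ(k,d) circuit with C ∉ I. Then there exist i ∈ {0,...,k−1}, a path p = (I, v_1,...,v_i) of C_{[i]} mod I, and α ∈ F*, such that C_{[i]'} − α·T_{i+1} ∈ ⟨p⟩ and T_{i+1} ∉ ⟨p⟩ (where [i]' = {i+1,...,k}). -/
import Mathlib


open MvPolynomial

noncomputable section

namespace SGPaper

variable {F : Type*}

/-- The linear form with coefficient vector `v`. -/
def toForm [Field F] {n : ℕ} (v : Fin n → F) : MvPolynomial (Fin n) F :=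
  ∑ i, MvPolynomial.C (v i) * MvPolynomial.X i

/-- A multiplication term `c · ∏_{ℓ ∈ S} ℓ`. -/
def mTerm [Field F] {n : ℕ} (c : F) (S : Multiset (Fin n → F)) : MvPolynomial (Fin n) F :=
  MvPolynomial.C c * (S.map toForm).prod

/-- The `F`-linear span of the forms in the multiset `S` (radical span). -/
def radsp (F : Type*) [Field F] {n : ℕ} (S : Multiset (Fin n → F)) :
    Submodule F (Fin n → F) :=
  Submodule.span F {v | v ∈ S}

/-- `b ∈ F^* · a + K`, i.e. `b` is similar to `a` modulo the subspace `K`. -/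
def simRel [Field F] {n : ℕ} (K : Submodule F (Fin n → F)) (a b : Fin n → F) : Prop :=
  ∃ c : F, c ≠ 0 ∧ b - c • a ∈ K

/-- A `K`-matching between two multisets of linear forms: a bijection `π` with
`π(ℓ) ∈ F^*·ℓ + K` for all `ℓ`. -/
def KMatching [Field F] {n : ℕ} (K : Submodule F (Fin n → F))
    (A B : Multiset (Fin n → F)) : Prop :=
  Multiset.Rel (simRel K) A B

/-- No element of `S` is a scalar multiple of another element of `S`. -/
def MultipleFree [Field F] {n : ℕ} (S : Finset (Fin n → F)) : Prop :=
  ∀ v ∈ S, ∀ w ∈ S, ∀ c : F, w = c • v → w = v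

/-- `S` is `SG_k`-closed: it consists of nonzero vectors, is multiple-free, and the span of
any `k` linearly independent vectors of `S` contains at least `k+1` vectors of `S`. -/
def SGClosed (F : Type*) [Field F] (k : ℕ) {n : ℕ} (S : Finset (Fin n → F)) : Prop :=
  (∀ v ∈ S, v ≠ 0) ∧ MultipleFree S ∧
    ∀ V : Finset (Fin n → F), V ⊆ S → V.card = k →
      LinearIndependent F (fun v : (V : Set (Fin n → F)) => (v : Fin n → F)) →
      k + 1 ≤ ((S : Set (Fin n → F)) ∩
        (Submodule.span F (V : Set (Fin n → F)) : Set (Fin n → F))).ncard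

/-- The rank of a finite set of vectors. -/
def sgRank (F : Type*) [Field F] {n : ℕ} (S : Finset (Fin n → F)) : ℕ :=
  Module.finrank F (Submodule.span F (S : Set (Fin n → F)))

/-- `SG_k(F, m)`: the largest possible rank of an `SG_k`-closed set of at most `m`
vectors in `F^n`, over all `n`. -/
def SGBound (F : Type*) [Field F] (k m : ℕ) : ℕ :=
  sSup {r | ∃ n : ℕ, ∃ S : Finset (Fin n → F), SGClosed F k S ∧ S.card ≤ m ∧ r = sgRank F S}

/-- The polynomial computed by a multiplication gate of a depth-3 circuit. -/
def circTerm [Field F] {n d : ℕ} (c : F) (v : Fin d → Fin n → F) : MvPolynomial (Fin n) F :=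
  MvPolynomial.C c * ∏ j, toForm (v j)

/-- The multiset `L(T_i)` of linear forms of the `i`-th gate. -/
def Lmul {F : Type*} {n k d : ℕ} (ℓ : Fin k → Fin d → Fin n → F) (i : Fin k) :
    Multiset (Fin n → F) :=
  Multiset.map (ℓ i) Finset.univ.val

/-- The circuit is simple: no nonzero linear form divides all the gates. -/
def IsSimple [Field F] {n k d : ℕ} (c : Fin k → F) (ℓ : Fin k → Fin d → Fin n → F) : Prop :=
  ¬ ∃ v : Fin n → F, v ≠ 0 ∧ ∀ i, toForm v ∣ circTerm (c i) (ℓ i)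

/-- The circuit is minimal: no nonempty proper subset of the gates sums to zero. -/
def IsMinimal [Field F] {n k d : ℕ} (c : Fin k → F) (ℓ : Fin k → Fin d → Fin n → F) : Prop :=
  ∀ S : Finset (Fin k), S.Nonempty → S ≠ Finset.univ →
    ∑ i ∈ S, circTerm (c i) (ℓ i) ≠ 0

/-- The rank of a depth-3 circuit: the rank of all the linear forms occurring in it. -/
def circRank (F : Type*) [Field F] {n k d : ℕ} (ℓ : Fin k → Fin d → Fin n → F) : ℕ :=
  Module.finrank F (Submodule.span F (Set.range fun p : Fin k × Fin d => ℓ p.1 p.2))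

open Classical in
/-- `M(L_K(T_i))`: the product of the forms of the gate lying in the subspace `K`. -/
def nucTerm [Field F] {n d : ℕ} (K : Submodule F (Fin n → F)) (v : Fin d → Fin n → F) :
    MvPolynomial (Fin n) F :=
  ∏ j ∈ Finset.univ.filter (fun j => v j ∈ K), toForm (v j)

/-- A partition `P` splits `S` if some class meets `S` but does not contain it. -/
def Splits {U : Type*} [DecidableEq U] {s : Finset U} (P : Finpartition s)
    (S : Finset U) : Prop :=
  ∃ X ∈ P.parts, (X ∩ S).Nonempty ∧ ¬ S ⊆ X


section Aux

variable [Field F] {n : ℕ}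

lemma toForm_zero : toForm (0 : Fin n → F) = 0 := by
  simp [toForm]

lemma toForm_add (v w : Fin n → F) : toForm (v + w) = toForm v + toForm w := by
  simp [toForm, add_mul, Finset.sum_add_distrib]

lemma toForm_smul (c : F) (v : Fin n → F) : toForm (c • v) = C c * toForm v := by
  simp [toForm, Finset.mul_sum, mul_assoc]

lemma toForm_sub (v w : Fin n → F) : toForm (v - w) = toForm v - toForm w := by
  simp [toForm, sub_mul, Finset.sum_sub_distrib]

lemma coeff_toForm (v : Fin n → F) (j : Fin n) :
    coeff (Finsupp.single j 1) (toForm v) = v j := by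
  classical
  simp only [toForm, coeff_sum, coeff_C_mul, coeff_X']
  rw [Finset.sum_eq_single j] <;> simp +contextual [Finsupp.single_left_inj (one_ne_zero (α := ℕ))]

lemma toForm_ne_zero {v : Fin n → F} (hv : v ≠ 0) : toForm v ≠ 0 := by
  intro h
  apply hv
  funext j
  have := coeff_toForm v j
  rw [h] at this
  simpa using this.symm

lemma mTerm_one (M : Multiset (Fin n → F)) : mTerm (1 : F) M = (M.map toForm).prod := by
  simp [mTerm]

lemma mTerm_mul (c c' : F) (A B : Multiset (Fin n → F)) :
    mTerm c A * mTerm c' B = mTerm (c * c') (A + B) := by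
  simp only [mTerm, Multiset.map_add, Multiset.prod_add, map_mul]
  ring

lemma exists_dual (K : Submodule F (Fin n → F)) {x : Fin n → F} (hx : x ∉ K) :
    ∃ φ : (Fin n → F) →ₗ[F] F, φ x = 1 ∧ ∀ y ∈ K, φ y = 0 := by
  obtain ⟨f, hfx, hfK⟩ := Submodule.exists_dual_map_eq_bot_of_notMem hx inferInstance
  refine ⟨(f x)⁻¹ • f, by simp [inv_mul_cancel₀ hfx], fun y hy => ?_⟩
  have : f y = 0 := by
    have : f y ∈ Submodule.map f K := Submodule.mem_map_of_mem hy
    rw [hfK] at this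
    simpa using this
  simp [this]

variable (φ : (Fin n → F) →ₗ[F] F) (x : Fin n → F)

/-- Substitution sending `toForm x` to `(1 - φ x) • toForm x`; kills `toForm x` when `φ x = 1`,
fixes forms in the kernel of `φ`. -/
def lsub : MvPolynomial (Fin n) F →ₐ[F] MvPolynomial (Fin n) F :=
  aeval (fun i => X i - C (φ (Pi.single i 1)) * toForm x)

lemma phi_eq (v : Fin n → F) : φ v = ∑ i, v i * φ (Pi.single i 1) := by
  rw [LinearMap.pi_apply_eq_sum_univ]
  refine Finset.sum_congr rfl fun i _ => ?_
  rw [smul_eq_mul]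
  congr 1
  congr 1
  funext j
  simp [Pi.single_apply, eq_comm]

lemma lsub_toForm (v : Fin n → F) :
    lsub φ x (toForm v) = toForm (v - φ v • x) := by
  rw [toForm_sub, toForm_smul]
  simp only [toForm, map_sum, map_mul, lsub, aeval_C, aeval_X, algebraMap_eq]
  simp only [mul_sub, Finset.sum_sub_distrib]
  congr 1
  rw [phi_eq φ v, map_sum, Finset.sum_mul]
  refine Finset.sum_congr rfl fun i _ => ?_
  rw [map_mul, mul_assoc]

lemma lsub_C (c : F) : lsub φ x (C c) = C c := by
  simp [lsub, algebraMap_eq]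

lemma lsub_mTerm (c : F) (M : Multiset (Fin n → F)) :
    lsub φ x (mTerm c M) = mTerm c (M.map fun v => v - φ v • x) := by
  simp only [mTerm, map_mul, lsub_C, map_multiset_prod,
    Multiset.map_map, Function.comp_def, lsub_toForm]

lemma lsub_fixes {c : F} {M : Multiset (Fin n → F)} (h : ∀ v ∈ M, φ v = 0) :
    lsub φ x (mTerm c M) = mTerm c M := by
  rw [lsub_mTerm]
  congr 1
  rw [show (M.map fun v => v - φ v • x) = M.map id by
    exact Multiset.map_congr rfl fun v hv => by simp [h v hv], Multiset.map_id]

/-- A set of multiplication terms all of whose linear forms lie in `K`. -/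
def MTermSet (K : Submodule F (Fin n → F)) (S : Set (MvPolynomial (Fin n) F)) : Prop :=
  ∀ g ∈ S, ∃ c M, g = mTerm c M ∧ ∀ v ∈ M, v ∈ K

variable {K : Submodule F (Fin n → F)} {S : Set (MvPolynomial (Fin n) F)}

lemma lsub_mem_span (hS : MTermSet K S) (hφK : ∀ y ∈ K, φ y = 0) {h : MvPolynomial (Fin n) F}
    (hh : h ∈ Ideal.span S) : lsub φ x h ∈ Ideal.span S := by
  induction hh using Submodule.span_induction with
  | mem g hg =>
    obtain ⟨c, M, rfl, hM⟩ := hS g hg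
    rw [lsub_fixes φ x fun v hv => hφK v (hM v hv)]
    exact Ideal.subset_span hg
  | zero => simp
  | add f g _ _ hf hg => rw [map_add]; exact Ideal.add_mem _ hf hg
  | smul a f _ hf =>
    rw [smul_eq_mul, map_mul]
    exact Ideal.mul_mem_left _ _ hf

lemma dvd_sub_lsub (f : MvPolynomial (Fin n) F) :
    toForm x ∣ f - lsub φ x f := by
  rw [← Ideal.mem_span_singleton]
  set Q := Ideal.Quotient.mkₐ F (Ideal.span {toForm x}) with hQ
  have hx0 : Q (toForm x) = 0 := by
    rw [hQ]
    simpa [Ideal.Quotient.eq_zero_iff_mem] using Ideal.mem_span_singleton_self (toForm x)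
  have key : Q.comp (lsub φ x) = Q := by
    apply MvPolynomial.algHom_ext
    intro i
    simp only [AlgHom.comp_apply, lsub, aeval_X]
    rw [map_sub, map_mul, hx0, mul_zero, sub_zero]
  have := DFunLike.congr_fun key f
  simp only [AlgHom.comp_apply] at this
  rw [← Ideal.Quotient.eq_zero_iff_mem]
  show Ideal.Quotient.mk _ _ = 0
  have : Q (f - lsub φ x f) = 0 := by rw [map_sub, this, sub_self]
  exact this

end Aux

section Star

open scoped Classical

variable [Field F] {n : ℕ} {K : Submodule F (Fin n → F)} {S : Set (MvPolynomial (Fin n) F)}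

lemma sub_lsub_mem (φ : (Fin n → F) →ₗ[F] F) (x : Fin n → F) (hS : MTermSet K S)
    (hφK : ∀ y ∈ K, φ y = 0) {h : MvPolynomial (Fin n) F} (hh : h ∈ Ideal.span S) :
    ∃ D ∈ Ideal.span S, h - lsub φ x h = toForm x * D := by
  induction hh using Submodule.span_induction with
  | mem g hg =>
    obtain ⟨c, M, rfl, hM⟩ := hS g hg
    exact ⟨0, Ideal.zero_mem _, by rw [lsub_fixes φ x fun v hv => hφK v (hM v hv)]; ring⟩
  | zero => exact ⟨0, Ideal.zero_mem _, by simp⟩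
  | add f g hf hg ihf ihg =>
    obtain ⟨D1, hD1, hE1⟩ := ihf
    obtain ⟨D2, hD2, hE2⟩ := ihg
    exact ⟨D1 + D2, Ideal.add_mem _ hD1 hD2, by rw [map_add]; linear_combination hE1 + hE2⟩
  | smul a f hf ihf =>
    obtain ⟨D, hD, hE⟩ := ihf
    obtain ⟨Da, hDa⟩ := dvd_sub_lsub φ x a
    refine ⟨a * D + Da * lsub φ x f,
      Ideal.add_mem _ (Ideal.mul_mem_left _ _ hD)
        (Ideal.mul_mem_left _ _ (lsub_mem_span φ x hS hφK hf)), ?_⟩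
    rw [smul_eq_mul, map_mul]
    linear_combination a * hE + lsub φ x f * hDa

lemma starstar (hS : MTermSet K S) {x : Fin n → F} (hx : x ∉ K)
    {p : MvPolynomial (Fin n) F} (hp : p * toForm x ∈ Ideal.span S) :
    p ∈ Ideal.span S := by
  obtain ⟨φ, hφx, hφK⟩ := exists_dual K hx
  have hlx : lsub φ x (toForm x) = 0 := by
    rw [lsub_toForm, hφx, one_smul, sub_self, toForm_zero]
  obtain ⟨D, hD, hE⟩ := sub_lsub_mem φ x hS hφK hp
  rw [map_mul, hlx, mul_zero, sub_zero] at hE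
  have hx0 : x ≠ 0 := fun h => hx (h ▸ K.zero_mem)
  have : p = D := by
    apply mul_left_cancel₀ (toForm_ne_zero hx0)
    rw [mul_comm (toForm x) p, hE]
  rwa [this]

lemma starstar_multi (hS : MTermSet K S) {M : Multiset (Fin n → F)}
    (hM : ∀ v ∈ M, v ∉ K) {p : MvPolynomial (Fin n) F}
    (hp : p * (M.map toForm).prod ∈ Ideal.span S) : p ∈ Ideal.span S := by
  induction M using Multiset.induction generalizing p with
  | empty => simpa using hp
  | cons a M ih =>
    rw [Multiset.map_cons, Multiset.prod_cons] at hp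
    have h1 : (p * (M.map toForm).prod) * toForm a ∈ Ideal.span S := by
      rw [show p * (M.map toForm).prod * toForm a = p * (toForm a * (M.map toForm).prod) by ring]
      exact hp
    have h2 := starstar hS (hM a (Multiset.mem_cons_self a M)) h1
    exact ih (fun v hv => hM v (Multiset.mem_cons_of_mem hv)) h2

lemma diamond (hS : MTermSet K S) {x : Fin n → F} (hx : x ∉ K) {M : Multiset (Fin n → F)}
    (hMK : ∀ y ∈ M, y ∉ K) (hMsim : ∀ y ∈ M, ∀ cc : F, cc ≠ 0 → y - cc • x ∉ K)
    {p : MvPolynomial (Fin n) F}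
    (hp : p * toForm x ∈ Ideal.span (insert (mTerm 1 M) S)) :
    p ∈ Ideal.span (insert (mTerm 1 M) S) := by
  obtain ⟨φ, hφx, hφK⟩ := exists_dual K hx
  rw [Ideal.mem_span_insert] at hp
  obtain ⟨q, h, hh, heq⟩ := hp
  have hlx : lsub φ x (toForm x) = 0 := by
    rw [lsub_toForm, hφx, one_smul, sub_self, toForm_zero]
  have heq2 := congrArg (lsub φ x) heq
  rw [map_mul, hlx, mul_zero, map_add, map_mul, lsub_mTerm] at heq2
  have h1 : lsub φ x q * mTerm 1 (M.map fun v => v - φ v • x) ∈ Ideal.span S := by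
    have : lsub φ x q * mTerm 1 (M.map fun v => v - φ v • x) = - lsub φ x h := by
      linear_combination -heq2
    rw [this]
    exact neg_mem (lsub_mem_span φ x hS hφK hh)
  have h2 : lsub φ x q ∈ Ideal.span S := by
    rw [mTerm_one] at h1
    refine starstar_multi hS (M := M.map fun v => v - φ v • x) ?_ h1
    intro v hv
    obtain ⟨y, hy, rfl⟩ := Multiset.mem_map.1 hv
    by_cases hφy : φ y = 0
    · rw [hφy, zero_smul, sub_zero]
      exact hMK y hy
    · exact hMsim y hy (φ y) hφy
  obtain ⟨Dq, hDq⟩ := dvd_sub_lsub φ x q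
  have h3 : (p - Dq * mTerm 1 M) * toForm x ∈ Ideal.span S := by
    have hEq : (p - Dq * mTerm 1 M) * toForm x = lsub φ x q * mTerm 1 M + h := by
      linear_combination heq + mTerm 1 M * hDq
    rw [hEq]
    exact Ideal.add_mem _ (Ideal.mul_mem_right _ _ h2) hh
  have h4 := starstar hS hx h3
  rw [Ideal.mem_span_insert]
  exact ⟨Dq, p - Dq * mTerm 1 M, h4, by ring⟩

lemma diamond_multi (hS : MTermSet K S) {M A : Multiset (Fin n → F)}
    (hA : ∀ x' ∈ A, x' ∉ K ∧ ∀ y ∈ M, ∀ cc : F, cc ≠ 0 → y - cc • x' ∉ K)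
    (hMK : ∀ y ∈ M, y ∉ K) {p : MvPolynomial (Fin n) F}
    (hp : p * (A.map toForm).prod ∈ Ideal.span (insert (mTerm 1 M) S)) :
    p ∈ Ideal.span (insert (mTerm 1 M) S) := by
  induction A using Multiset.induction generalizing p with
  | empty => simpa using hp
  | cons a A ih =>
    rw [Multiset.map_cons, Multiset.prod_cons] at hp
    have h1 : (p * (A.map toForm).prod) * toForm a ∈ Ideal.span (insert (mTerm 1 M) S) := by
      rw [show p * (A.map toForm).prod * toForm a = p * (toForm a * (A.map toForm).prod) by ring]
      exact hp
    obtain ⟨haK, hasim⟩ := hA a (Multiset.mem_cons_self a A)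
    have h2 := diamond hS haK hMK hasim h1
    exact ih (fun v hv => hA v (Multiset.mem_cons_of_mem hv)) h2

lemma simRel_refl (K : Submodule F (Fin n → F)) (a : Fin n → F) : simRel K a a :=
  ⟨1, one_ne_zero, by simp⟩

lemma simRel_symm {a b : Fin n → F} (h : simRel K a b) : simRel K b a := by
  obtain ⟨c, hc, hm⟩ := h
  refine ⟨c⁻¹, inv_ne_zero hc, ?_⟩
  have h2 := K.smul_mem (-c⁻¹) hm
  have h3 : (-c⁻¹) • (b - c • a) = a - c⁻¹ • b := by
    rw [smul_sub, smul_smul, neg_mul, inv_mul_cancel₀ hc]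
    module
  rwa [h3] at h2

lemma simRel_trans {a b c' : Fin n → F} (h1 : simRel K a b) (h2 : simRel K b c') :
    simRel K a c' := by
  obtain ⟨c1, hc1, hm1⟩ := h1
  obtain ⟨c2, hc2, hm2⟩ := h2
  refine ⟨c2 * c1, mul_ne_zero hc2 hc1, ?_⟩
  have := K.add_mem hm2 (K.smul_mem c2 hm1)
  rw [show c' - c2 • b + c2 • (b - c1 • a) = c' - (c2 * c1) • a by
    rw [smul_sub, smul_smul]; abel] at this
  exact this

lemma mem_of_simRel {a b : Fin n → F} (ha : a ∈ K) (h : simRel K a b) : b ∈ K := by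
  obtain ⟨c, hc, hm⟩ := h
  have := K.add_mem hm (K.smul_mem c ha)
  rwa [sub_add_cancel] at this

lemma simRel_of_mem_mem {a b : Fin n → F} (ha : a ∈ K) (hb : b ∈ K) : simRel K a b :=
  ⟨1, one_ne_zero, K.sub_mem hb (by simpa using ha)⟩

lemma crt_nonK (hS : MTermSet K S) {g : MvPolynomial (Fin n) F}
    (L₁ : Multiset (Fin n → F)) (hL : ∀ y ∈ L₁, y ∉ K)
    (hg : ∀ a ∈ L₁, g ∈ Ideal.span (insert (mTerm 1 (L₁.filter (simRel K a))) S)) :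
    g ∈ Ideal.span (insert (mTerm 1 L₁) S) := by
  induction L₁ using Multiset.strongInductionOn with
  | _ L₁ ih =>
  by_cases h0 : L₁ = 0
  · subst h0
    rw [Ideal.mem_span_insert]
    exact ⟨g, 0, Ideal.zero_mem _, by simp [mTerm]⟩
  obtain ⟨a, ha⟩ := Multiset.exists_mem_of_ne_zero h0
  set A := L₁.filter (simRel K a) with hA
  set L' := L₁.filter (fun y => ¬ simRel K a y) with hL'
  have hlt : L' < L₁ := by
    refine lt_of_le_of_ne (Multiset.filter_le _ _) fun hEq => ?_
    have : a ∈ L' := hEq ▸ ha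
    rw [hL', Multiset.mem_filter] at this
    exact this.2 (simRel_refl K a)
  have hIH : g ∈ Ideal.span (insert (mTerm 1 L') S) := by
    refine ih L' hlt (fun y hy => hL y (Multiset.mem_of_mem_filter hy)) fun b hb => ?_
    have hbL : b ∈ L₁ := Multiset.mem_of_mem_filter hb
    have hab : ¬ simRel K a b := (Multiset.mem_filter.1 hb).2
    have hfilter : L'.filter (simRel K b) = L₁.filter (simRel K b) := by
      rw [hL', Multiset.filter_filter]
      refine Multiset.filter_congr fun y hy => ?_
      constructor
      · exact fun h => h.1
      · intro hby
        refine ⟨hby, fun hay => hab ?_⟩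
        exact simRel_trans hay (simRel_symm hby)
    rw [hfilter]
    exact hg b hbL
  obtain ⟨p, h, hh, heq⟩ := Ideal.mem_span_insert.1 (hg a ha)
  rw [← hA] at heq
  have hpvA : p * mTerm 1 A ∈ Ideal.span (insert (mTerm 1 L') S) := by
    have : p * mTerm 1 A = g - h := by rw [heq]; ring
    rw [this]
    exact Ideal.sub_mem _ hIH (Ideal.span_mono (Set.subset_insert _ _) hh)
  rw [mTerm_one A] at hpvA
  have hp : p ∈ Ideal.span (insert (mTerm 1 L') S) := by
    refine diamond_multi hS (fun x' hx' => ?_) (fun y hy => hL y (Multiset.mem_of_mem_filter hy))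
      hpvA
    rw [hA, Multiset.mem_filter] at hx'
    obtain ⟨hx'L, hax'⟩ := hx'
    refine ⟨hL x' hx'L, fun y hy cc hcc hmem => ?_⟩
    have hyL' : ¬ simRel K a y := (Multiset.mem_filter.1 hy).2
    exact hyL' (simRel_trans hax' ⟨cc, hcc, hmem⟩)
  obtain ⟨q, h₂, hh₂, heq₂⟩ := Ideal.mem_span_insert.1 hp
  rw [Ideal.mem_span_insert]
  refine ⟨q, h₂ * mTerm 1 A + h, Ideal.add_mem _ (Ideal.mul_mem_right _ _ hh₂) hh, ?_⟩
  have hsum : mTerm 1 L' * mTerm 1 A = mTerm 1 L₁ := by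
    rw [mTerm_mul, one_mul, add_comm]
    congr 1
    exact Multiset.filter_add_not _ _
  rw [heq, heq₂]
  linear_combination q * hsum

lemma crt_full (hS : MTermSet K S) {g : MvPolynomial (Fin n) F}
    (L : Multiset (Fin n → F))
    (hg : ∀ a ∈ L, g ∈ Ideal.span (insert (mTerm 1 (L.filter (simRel K a))) S)) :
    g ∈ Ideal.span (insert (mTerm 1 L) S) := by
  set LK := L.filter (fun y => y ∈ K) with hLKdef
  set LN := L.filter (fun y => ¬ y ∈ K) with hLNdef
  have hLNK : ∀ y ∈ LN, y ∉ K := fun y hy => (Multiset.mem_filter.1 hy).2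
  have hNode : ∀ b ∈ LN, g ∈ Ideal.span (insert (mTerm 1 (LN.filter (simRel K b))) S) := by
    intro b hb
    have hbL : b ∈ L := Multiset.mem_of_mem_filter hb
    have hbK : b ∉ K := (Multiset.mem_filter.1 hb).2
    have hfilter : LN.filter (simRel K b) = L.filter (simRel K b) := by
      rw [hLNdef, Multiset.filter_filter]
      refine Multiset.filter_congr fun y hy => ?_
      constructor
      · exact fun h => h.1
      · intro hby
        refine ⟨hby, fun hyK => hbK (mem_of_simRel hyK (simRel_symm hby))⟩
    rw [hfilter]
    exact hg b hbL
  by_cases hLK0 : LK = 0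
  · have hall : ∀ y ∈ L, y ∉ K := by
      intro y hy hyK
      have : y ∈ LK := Multiset.mem_filter.2 ⟨hy, hyK⟩
      rw [hLK0] at this
      simp at this
    have hall2 : LN = L := Multiset.filter_eq_self.2 hall
    rw [← hall2]
    exact crt_nonK hS LN hLNK hNode
  obtain ⟨a₀, ha₀⟩ := Multiset.exists_mem_of_ne_zero hLK0
  have ha₀L : a₀ ∈ L := Multiset.mem_of_mem_filter ha₀
  have ha₀K : a₀ ∈ K := (Multiset.mem_filter.1 ha₀).2
  have hKfilter : L.filter (simRel K a₀) = LK := by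
    rw [hLKdef]
    refine Multiset.filter_congr fun y hy => ?_
    constructor
    · exact fun h => mem_of_simRel ha₀K h
    · exact fun h => simRel_of_mem_mem ha₀K h
  have hgK : g ∈ Ideal.span (insert (mTerm 1 LK) S) := by
    have := hg a₀ ha₀L
    rwa [hKfilter] at this
  obtain ⟨p, h₁, hh₁, heq₁⟩ := Ideal.mem_span_insert.1 hgK
  have hgN : g ∈ Ideal.span (insert (mTerm 1 LN) S) := crt_nonK hS LN hLNK hNode
  have hpvK : p * mTerm 1 LK ∈ Ideal.span (insert (mTerm 1 LN) S) := by
    have : p * mTerm 1 LK = g - h₁ := by rw [heq₁]; ring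
    rw [this]
    exact Ideal.sub_mem _ hgN (Ideal.span_mono (Set.subset_insert _ _) hh₁)
  obtain ⟨q, h₂, hh₂, heq₂⟩ := Ideal.mem_span_insert.1 hpvK
  have hS' : MTermSet K (insert (mTerm 1 LK) S) := by
    intro g' hg'
    rcases hg' with hg' | hg'
    · exact ⟨1, LK, hg', fun v hv => (Multiset.mem_filter.1 hv).2⟩
    · exact hS g' hg'
  have hqvN : q * mTerm 1 LN ∈ Ideal.span (insert (mTerm 1 LK) S) := by
    have : q * mTerm 1 LN = p * mTerm 1 LK - h₂ := by rw [heq₂]; ring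
    rw [this]
    refine Ideal.sub_mem _ (Ideal.mul_mem_left _ _ (Ideal.subset_span (Set.mem_insert _ _)))
      (Ideal.span_mono (Set.subset_insert _ _) hh₂)
  have hq : q ∈ Ideal.span (insert (mTerm 1 LK) S) := by
    rw [mTerm_one LN] at hqvN
    exact starstar_multi hS' hLNK hqvN
  obtain ⟨r, h₃, hh₃, heq₃⟩ := Ideal.mem_span_insert.1 hq
  have hsum : mTerm 1 LK * mTerm 1 LN = mTerm 1 L := by
    rw [mTerm_mul, one_mul]
    congr 1
    exact Multiset.filter_add_not _ _
  rw [Ideal.mem_span_insert]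
  refine ⟨r, h₃ * mTerm 1 LN + h₂ + h₁,
    Ideal.add_mem _ (Ideal.add_mem _ (Ideal.mul_mem_right _ _ hh₃) hh₂) hh₁, ?_⟩
  rw [heq₁, heq₂, heq₃]
  linear_combination r * hsum

end Star

section Psi

variable [Field F] {n : ℕ}

/-- The grading witness map `X i ↦ C (X i) * X`. -/
def Psi : MvPolynomial (Fin n) F →ₐ[F] Polynomial (MvPolynomial (Fin n) F) :=
  aeval (fun i => Polynomial.C (X i) * Polynomial.X)

lemma psi_C (c : F) : Psi (C c : MvPolynomial (Fin n) F) = Polynomial.C (C c) := by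
  simp [Psi, algebraMap_eq, Polynomial.algebraMap_apply]

lemma psi_toForm (v : Fin n → F) :
    Psi (toForm v) = Polynomial.C (toForm v) * Polynomial.X := by
  simp only [toForm, map_sum, map_mul, Psi, aeval_X, map_sum (Polynomial.C (R := MvPolynomial (Fin n) F))]
  rw [Finset.sum_mul]
  refine Finset.sum_congr rfl fun i _ => ?_
  rw [show (aeval fun i => Polynomial.C (X i : MvPolynomial (Fin n) F) * Polynomial.X) (C (v i))
      = Polynomial.C (C (v i)) from psi_C (v i)]
  rw [← mul_assoc, ← Polynomial.C_mul]

lemma psi_prod (M : Multiset (Fin n → F)) :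
    Psi ((M.map toForm).prod)
      = Polynomial.C ((M.map toForm).prod) * Polynomial.X ^ (Multiset.card M) := by
  induction M using Multiset.induction with
  | empty => simp
  | cons a M ih =>
    rw [Multiset.map_cons, Multiset.prod_cons, map_mul, ih, psi_toForm, Multiset.card_cons,
      Polynomial.C_mul, pow_succ]
    ring

lemma psi_mTerm (c : F) (M : Multiset (Fin n → F)) :
    Psi (mTerm c M) = Polynomial.C (mTerm c M) * Polynomial.X ^ (Multiset.card M) := by
  rw [mTerm, map_mul, psi_C, psi_prod, Polynomial.C_mul]
  ring

lemma circTerm_eq {d : ℕ} (c : F) (v : Fin d → Fin n → F) :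
    circTerm c v = C c * mTerm 1 (Multiset.map v Finset.univ.val) := by
  rw [circTerm, mTerm, map_one, one_mul, Multiset.map_map]
  congr 1

lemma card_map_univ {d : ℕ} (v : Fin d → Fin n → F) :
    Multiset.card (Multiset.map v Finset.univ.val) = d := by
  simp

lemma psi_circTerm {d : ℕ} (c : F) (v : Fin d → Fin n → F) :
    Psi (circTerm c v) = Polynomial.C (circTerm c v) * Polynomial.X ^ d := by
  rw [circTerm_eq, map_mul, psi_C, psi_mTerm, card_map_univ, Polynomial.C_mul]
  ring

lemma psi_coeff_mem {S : Set (MvPolynomial (Fin n) F)}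
    (hS : ∀ g ∈ S, ∃ e, Psi g = Polynomial.C g * Polynomial.X ^ e)
    {h : MvPolynomial (Fin n) F} (hh : h ∈ Ideal.span S) :
    ∀ m, (Psi h).coeff m ∈ Ideal.span S := by
  induction hh using Submodule.span_induction with
  | mem g hg =>
    intro m
    obtain ⟨e, hPsi⟩ := hS g hg
    rw [hPsi, Polynomial.coeff_C_mul, Polynomial.coeff_X_pow]
    split_ifs
    · simpa using Ideal.subset_span hg
    · simp
  | zero => simp
  | add f g hf hg ihf ihg => intro m; rw [map_add, Polynomial.coeff_add]; exact add_mem (ihf m) (ihg m)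
  | smul a f hf ihf =>
    intro m
    rw [smul_eq_mul, map_mul, Polynomial.coeff_mul]
    exact Ideal.sum_mem _ fun p _ => Ideal.mul_mem_left _ _ (ihf p.2)

lemma psi_coeff_zero (q : MvPolynomial (Fin n) F) :
    (Psi q).coeff 0 = C (constantCoeff q) := by
  have : (Polynomial.constantCoeff.comp (Psi (n := n) (F := F) : MvPolynomial (Fin n) F →+* _))
      = (C : F →+* MvPolynomial (Fin n) F).comp constantCoeff := by
    apply MvPolynomial.ringHom_ext
    · intro r
      simp [psi_C, Polynomial.constantCoeff_apply]
    · intro i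
      simp [Psi, Polynomial.constantCoeff_apply, Polynomial.mul_coeff_zero]
  exact DFunLike.congr_fun this q

lemma scalar_extract {S : Set (MvPolynomial (Fin n) F)}
    (hS : ∀ g ∈ S, ∃ e, Psi g = Polynomial.C g * Polynomial.X ^ e)
    {g T' : MvPolynomial (Fin n) F} {d : ℕ}
    (hgΨ : Psi g = Polynomial.C g * Polynomial.X ^ d)
    (hTΨ : Psi T' = Polynomial.C T' * Polynomial.X ^ d)
    (hmem : g ∈ Ideal.span (insert T' S)) :
    ∃ α : F, g - C α * T' ∈ Ideal.span S := by
  obtain ⟨q, h, hh, heq⟩ := Ideal.mem_span_insert.1 hmem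
  refine ⟨constantCoeff q, ?_⟩
  have hΨ : Psi g = Psi q * Psi T' + Psi h := by rw [heq, map_add, map_mul]
  have hcoeff := congrArg (fun p => Polynomial.coeff p d) hΨ
  simp only [hgΨ, hTΨ] at hcoeff
  rw [Polynomial.coeff_C_mul, Polynomial.coeff_X_pow, if_pos rfl, mul_one,
    Polynomial.coeff_add] at hcoeff
  have hmul : (Psi q * (Polynomial.C T' * Polynomial.X ^ d)).coeff d
      = C (constantCoeff q) * T' := by
    rw [← mul_assoc]
    nth_rewrite 2 [show d = 0 + d from (zero_add d).symm]
    rw [Polynomial.coeff_mul_X_pow,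
      Polynomial.mul_coeff_zero, psi_coeff_zero, Polynomial.coeff_C, if_pos rfl]
  rw [hmul] at hcoeff
  have : g - C (constantCoeff q) * T' = (Psi h).coeff d := by
    rw [hcoeff]; ring
  rw [this]
  exact psi_coeff_mem hS hh d

end Psi

section Main

open scoped Classical

variable [Field F] {n m k d : ℕ}

lemma Iio_castSucc_eq {i : ℕ} (j : Fin i) :
    Finset.Iio (Fin.castSucc j) = (Finset.Iio j).map Fin.castSuccEmb := by
  ext l'
  simp only [Finset.mem_Iio, Finset.mem_map, Fin.castSuccEmb, Fin.castAddEmb,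
    Function.Embedding.coeFn_mk]
  constructor
  · intro h
    have h1 : (l' : ℕ) < (j : ℕ) := h
    refine ⟨⟨l', lt_trans h1 j.2⟩, h1, ?_⟩
    ext
    simp [Fin.castAdd]
  · rintro ⟨l, hl, rfl⟩
    exact Fin.castSucc_lt_castSucc_iff.2 hl

lemma Iio_last_eq {i : ℕ} :
    Finset.Iio (Fin.last i) = Finset.univ.map Fin.castSuccEmb := by
  ext l'
  simp only [Finset.mem_Iio, Finset.mem_map, Fin.castSuccEmb, Fin.castAddEmb,
    Function.Embedding.coeFn_mk, Finset.mem_univ, true_and]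
  constructor
  · intro h
    have h1 : (l' : ℕ) < i := h
    exact ⟨⟨l', h1⟩, by ext; simp [Fin.castAdd]⟩
  · rintro ⟨l, rfl⟩
    exact Fin.castSucc_lt_last l

lemma sum_Iio_snoc {β : Type*} [AddCommMonoid β] {i : ℕ} (V : Fin i → β) (A : β) (j : Fin i) :
    ∑ l ∈ Finset.Iio (Fin.castSucc j), (Fin.snoc V A : Fin (i + 1) → β) l
      = ∑ l ∈ Finset.Iio j, V l := by
  rw [Iio_castSucc_eq, Finset.sum_map]
  refine Finset.sum_congr rfl fun l _ => ?_
  exact Fin.snoc_castSucc (α := fun _ => β) A V l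

lemma sum_Iio_last_snoc {β : Type*} [AddCommMonoid β] {i : ℕ} (V : Fin i → β) (A : β) :
    ∑ l ∈ Finset.Iio (Fin.last i), (Fin.snoc V A : Fin (i + 1) → β) l
      = ∑ l : Fin i, V l := by
  rw [Iio_last_eq, Finset.sum_map]
  refine Finset.sum_congr rfl fun l _ => ?_
  exact Fin.snoc_castSucc (α := fun _ => β) A V l

variable (cI : Fin m → F) (SI : Fin m → Multiset (Fin n → F))
variable (c : Fin k → F) (ℓ : Fin k → Fin d → Fin n → F)

/-- The generating set of the path ideal `⟨I, v_1, ..., v_i⟩`. -/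
def genSet (i : ℕ) (V : Fin i → Multiset (Fin n → F)) : Set (MvPolynomial (Fin n) F) :=
  (Set.range fun t => mTerm (cI t) (SI t)) ∪ Set.range fun j : Fin i => mTerm 1 (V j)

lemma genSet_mterm (i : ℕ) (V : Fin i → Multiset (Fin n → F)) :
    MTermSet (radsp F ((∑ t, SI t) + ∑ l : Fin i, V l)) (genSet cI SI i V) := by
  rintro g (⟨t, rfl⟩ | ⟨j, rfl⟩)
  · refine ⟨cI t, SI t, rfl, fun v hv => Submodule.subset_span ?_⟩
    show v ∈ (∑ t, SI t) + ∑ l : Fin i, V l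
    rw [Multiset.mem_add]
    exact Or.inl (Multiset.mem_sum.2 ⟨t, Finset.mem_univ t, hv⟩)
  · refine ⟨1, V j, rfl, fun v hv => Submodule.subset_span ?_⟩
    show v ∈ (∑ t, SI t) + ∑ l : Fin i, V l
    rw [Multiset.mem_add]
    exact Or.inr (Multiset.mem_sum.2 ⟨j, Finset.mem_univ j, hv⟩)

lemma genSet_psi (i : ℕ) (V : Fin i → Multiset (Fin n → F)) :
    ∀ g ∈ genSet cI SI i V, ∃ e, Psi g = Polynomial.C g * Polynomial.X ^ e := by
  rintro g (⟨t, rfl⟩ | ⟨j, rfl⟩)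
  · exact ⟨_, psi_mTerm _ _⟩
  · exact ⟨_, psi_mTerm _ _⟩

lemma genSet_snoc (i : ℕ) (V : Fin i → Multiset (Fin n → F)) (A : Multiset (Fin n → F)) :
    genSet cI SI (i + 1) (Fin.snoc V A) = insert (mTerm 1 A) (genSet cI SI i V) := by
  ext x
  simp only [genSet, Set.mem_union, Set.mem_range, Set.mem_insert_iff]
  constructor
  · rintro (⟨t, rfl⟩ | ⟨j, rfl⟩)
    · exact Or.inr (Or.inl ⟨t, rfl⟩)
    · induction j using Fin.lastCases with
      | last => rw [Fin.snoc_last]; exact Or.inl rfl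
      | cast j0 => rw [Fin.snoc_castSucc]; exact Or.inr (Or.inr ⟨j0, rfl⟩)
  · rintro (rfl | ⟨t, rfl⟩ | ⟨j0, rfl⟩)
    · exact Or.inr ⟨Fin.last i, by rw [Fin.snoc_last]⟩
    · exact Or.inl ⟨t, rfl⟩
    · exact Or.inr ⟨Fin.castSucc j0, by rw [Fin.snoc_castSucc]⟩

lemma psi_sum_circ (s : Finset (Fin k)) :
    Psi (∑ t ∈ s, circTerm (c t) (ℓ t))
      = Polynomial.C (∑ t ∈ s, circTerm (c t) (ℓ t)) * Polynomial.X ^ d := by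
  rw [map_sum, map_sum (Polynomial.C (R := MvPolynomial (Fin n) F)), Finset.sum_mul]
  exact Finset.sum_congr rfl fun t _ => psi_circTerm (c t) (ℓ t)

lemma filter_nat_split {i : ℕ} (hik : i < k) :
    Finset.univ.filter (fun t : Fin k => i ≤ (t : ℕ))
      = insert ⟨i, hik⟩ (Finset.univ.filter (fun t : Fin k => i + 1 ≤ (t : ℕ))) := by
  ext t
  simp only [Finset.mem_filter, Finset.mem_univ, true_and, Finset.mem_insert]
  constructor
  · intro h
    rcases eq_or_lt_of_le h with heq | hlt
    · exact Or.inl (Fin.ext heq.symm)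
    · exact Or.inr hlt
  · rintro (rfl | h)
    · exact le_refl _
    · omega

lemma mk_notMem_filter {i : ℕ} (hik : i < k) :
    (⟨i, hik⟩ : Fin k) ∉ Finset.univ.filter (fun t : Fin k => i + 1 ≤ (t : ℕ)) := by
  simp

lemma step_main (hc : ∀ t, c t ≠ 0) :
    ∀ (fuel i : ℕ) (hik : i ≤ k) (V : Fin i → Multiset (Fin n → F)),
    k - i ≤ fuel →
    (∀ j : Fin i, ∃ a ∈ Lmul ℓ (Fin.castLE hik j),
        V j = Multiset.filter
          (simRel (radsp F ((∑ t, SI t) + ∑ l ∈ Finset.Iio j, V l)) a)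
          (Lmul ℓ (Fin.castLE hik j))) →
    (∑ t ∈ Finset.univ.filter (fun t : Fin k => i ≤ (t : ℕ)), circTerm (c t) (ℓ t))
      ∉ Ideal.span (genSet cI SI i V) →
    (∃ (i : ℕ) (hik : i < k) (V : Fin i → Multiset (Fin n → F)),
      (∀ j : Fin i, ∃ a ∈ Lmul ℓ (Fin.castLE hik.le j),
        V j = Multiset.filter
          (simRel (radsp F ((∑ t, SI t) + ∑ l ∈ Finset.Iio j, V l)) a)
          (Lmul ℓ (Fin.castLE hik.le j))) ∧
      ∃ α : F, α ≠ 0 ∧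
        (∑ t ∈ Finset.univ.filter (fun t : Fin k => i ≤ (t : ℕ)),
            circTerm (c t) (ℓ t)) - α • circTerm (c ⟨i, hik⟩) (ℓ ⟨i, hik⟩) ∈
          Ideal.span ((Set.range fun t => mTerm (cI t) (SI t)) ∪
            Set.range fun j : Fin i => mTerm 1 (V j)) ∧
        circTerm (c ⟨i, hik⟩) (ℓ ⟨i, hik⟩) ∉
          Ideal.span ((Set.range fun t => mTerm (cI t) (SI t)) ∪
            Set.range fun j : Fin i => mTerm 1 (V j))) := by
  intro fuel
  induction fuel with
  | zero =>
    intro i hik V hfuel hpath hnot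
    exfalso
    have hik' : i = k := by omega
    apply hnot
    have : Finset.univ.filter (fun t : Fin k => i ≤ (t : ℕ)) = ∅ := by
      refine Finset.filter_false_of_mem fun t _ => ?_
      have := t.2
      omega
    rw [this, Finset.sum_empty]
    exact Ideal.zero_mem _
  | succ fuel ih =>
    intro i hik V hfuel hpath hnot
    rcases eq_or_lt_of_le hik with heq | hik'
    · exfalso
      apply hnot
      have : Finset.univ.filter (fun t : Fin k => i ≤ (t : ℕ)) = ∅ := by
        refine Finset.filter_false_of_mem fun t _ => ?_
        have := t.2
        omega
      rw [this, Finset.sum_empty]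
      exact Ideal.zero_mem _
    set Kv := radsp F ((∑ t, SI t) + ∑ l : Fin i, V l) with hKv
    set L := Lmul ℓ ⟨i, hik'⟩ with hLdef
    set g := ∑ t ∈ Finset.univ.filter (fun t : Fin k => i ≤ (t : ℕ)), circTerm (c t) (ℓ t)
      with hgdef
    have hcardL : Multiset.card L = d := by
      rw [hLdef, Lmul]
      simp
    by_cases hcase : g ∈ Ideal.span (insert (mTerm 1 L) (genSet cI SI i V))
    · -- certificate found at index i
      obtain ⟨α, hα⟩ := scalar_extract (genSet_psi cI SI i V)
        (psi_sum_circ c ℓ _) (by rw [psi_mTerm, hcardL]) hcase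
      have hα0 : α ≠ 0 := by
        rintro rfl
        rw [map_zero, zero_mul, sub_zero] at hα
        exact hnot hα
      have hcirc : circTerm (c ⟨i, hik'⟩) (ℓ ⟨i, hik'⟩) = C (c ⟨i, hik'⟩) * mTerm 1 L := by
        rw [circTerm_eq]
        rfl
      refine ⟨i, hik', V, hpath, α * (c ⟨i, hik'⟩)⁻¹, ?_, ?_, ?_⟩
      · exact mul_ne_zero hα0 (inv_ne_zero (hc _))
      · have hsmul : (α * (c ⟨i, hik'⟩)⁻¹) • circTerm (c ⟨i, hik'⟩) (ℓ ⟨i, hik'⟩)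
            = C α * mTerm 1 L := by
          rw [hcirc, smul_eq_C_mul, ← mul_assoc, ← C_mul, mul_assoc α _ _,
            inv_mul_cancel₀ (hc _), mul_one]
        rw [hsmul]
        exact hα
      · intro hmem
        apply hnot
        have : g = (g - C α * mTerm 1 L) + (α * (c ⟨i, hik'⟩)⁻¹) • circTerm (c ⟨i, hik'⟩) (ℓ ⟨i, hik'⟩) := by
          rw [hcirc, smul_eq_C_mul, ← mul_assoc, ← C_mul, mul_assoc α _ _,
            inv_mul_cancel₀ (hc _), mul_one]
          ring
        rw [this]
        refine Ideal.add_mem _ hα ?_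
        rw [smul_eq_C_mul]
        exact Ideal.mul_mem_left _ _ hmem
    · -- extend the path
      obtain ⟨a, haL, hnode⟩ : ∃ a ∈ L,
          g ∉ Ideal.span (insert (mTerm 1 (L.filter (simRel Kv a))) (genSet cI SI i V)) := by
        by_contra hno
        push_neg at hno
        exact hcase (crt_full (genSet_mterm cI SI i V) L hno)
      set A := L.filter (simRel Kv a) with hAdef
      set V' : Fin (i + 1) → Multiset (Fin n → F) := Fin.snoc V A with hV'def
      have hgen' : genSet cI SI (i + 1) V' = insert (mTerm 1 A) (genSet cI SI i V) :=
        genSet_snoc cI SI i V A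
      have hTmem : circTerm (c ⟨i, hik'⟩) (ℓ ⟨i, hik'⟩)
          ∈ Ideal.span (genSet cI SI (i + 1) V') := by
        rw [hgen']
        have hsplit : mTerm 1 L = mTerm 1 A * mTerm 1 (L.filter fun y => ¬ simRel Kv a y) := by
          rw [mTerm_mul, one_mul]
          congr 1
          exact (Multiset.filter_add_not _ _).symm
        rw [circTerm_eq]
        have : (Multiset.map (ℓ ⟨i, hik'⟩) Finset.univ.val) = L := rfl
        rw [this, hsplit, ← mul_assoc]
        exact Ideal.mul_mem_right _ _
          (Ideal.mul_mem_left _ _ (Ideal.subset_span (Set.mem_insert _ _)))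
      have hsumsplit : g = circTerm (c ⟨i, hik'⟩) (ℓ ⟨i, hik'⟩) +
          ∑ t ∈ Finset.univ.filter (fun t : Fin k => i + 1 ≤ (t : ℕ)), circTerm (c t) (ℓ t) := by
        rw [hgdef, filter_nat_split hik', Finset.sum_insert (mk_notMem_filter hik')]
      have hnot' : (∑ t ∈ Finset.univ.filter (fun t : Fin k => i + 1 ≤ (t : ℕ)),
          circTerm (c t) (ℓ t)) ∉ Ideal.span (genSet cI SI (i + 1) V') := by
        intro hmem
        apply hnode
        rw [← hgen']
        rw [hsumsplit]
        exact Ideal.add_mem _ hTmem hmem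
      have hpath' : ∀ j : Fin (i + 1), ∃ a' ∈ Lmul ℓ (Fin.castLE hik' j),
          V' j = Multiset.filter
            (simRel (radsp F ((∑ t, SI t) + ∑ l ∈ Finset.Iio j, V' l)) a')
            (Lmul ℓ (Fin.castLE hik' j)) := by
        intro j
        induction j using Fin.lastCases with
        | last =>
          refine ⟨a, haL, ?_⟩
          · have h1 : V' (Fin.last i) = A := Fin.snoc_last _ _
            have h2 : ∑ l ∈ Finset.Iio (Fin.last i), V' l = ∑ l : Fin i, V l :=
              sum_Iio_last_snoc V A
            rw [h1, h2]
            exact hAdef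
        | cast j0 =>
          obtain ⟨a0, ha0, heq0⟩ := hpath j0
          refine ⟨a0, ha0, ?_⟩
          · have h1 : V' (Fin.castSucc j0) = V j0 := Fin.snoc_castSucc _ _ _
            have h2 : ∑ l ∈ Finset.Iio (Fin.castSucc j0), V' l = ∑ l ∈ Finset.Iio j0, V l :=
              sum_Iio_snoc V A j0
            rw [h1, h2]
            exact heq0
      exact ih (i + 1) hik' V' (by omega) hpath' hnot'

end Main


open scoped Classical in
/-- **Certificate for a non-identity.** If `C = T_1 + ... + T_k ∉ I`, there is
an `i < k`, a path `p = (I, v_1, ..., v_i)` of `C_{[i]}` mod `I` (each `v_j` a node of `T_j`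
modulo the ideal generated by `I` and the previous nodes), and `α ∈ F^*` with
`C_{[i]'} − α·T_{i+1} ∈ ⟨p⟩` and `T_{i+1} ∉ ⟨p⟩`. (Indices are `0`-based here: the path runs
through the gates of index `< i` and the distinguished gate has index `i`.) -/
theorem certificate_for_non_identity {F : Type*} [Field F] {n m k d : ℕ}
    (cI : Fin m → F) (SI : Fin m → Multiset (Fin n → F))
    (hcI : ∀ i, cI i ≠ 0) (hSI : ∀ i, ∀ v ∈ SI i, v ≠ 0)
    (c : Fin k → F) (ℓ : Fin k → Fin d → Fin n → F)
    (hc : ∀ i, c i ≠ 0) (hℓ : ∀ i j, ℓ i j ≠ 0)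
    (hC : ∑ i, circTerm (c i) (ℓ i) ∉
      Ideal.span (Set.range fun i => mTerm (cI i) (SI i))) :
    ∃ (i : ℕ) (hik : i < k) (V : Fin i → Multiset (Fin n → F)),
      (∀ j : Fin i, ∃ a ∈ Lmul ℓ (Fin.castLE hik.le j),
        V j = Multiset.filter
          (simRel (radsp F ((∑ t, SI t) + ∑ l ∈ Finset.Iio j, V l)) a)
          (Lmul ℓ (Fin.castLE hik.le j))) ∧
      ∃ α : F, α ≠ 0 ∧
        (∑ t ∈ Finset.univ.filter (fun t : Fin k => i ≤ (t : ℕ)),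
            circTerm (c t) (ℓ t)) - α • circTerm (c ⟨i, hik⟩) (ℓ ⟨i, hik⟩) ∈
          Ideal.span ((Set.range fun t => mTerm (cI t) (SI t)) ∪
            Set.range fun j : Fin i => mTerm 1 (V j)) ∧
        circTerm (c ⟨i, hik⟩) (ℓ ⟨i, hik⟩) ∉
          Ideal.span ((Set.range fun t => mTerm (cI t) (SI t)) ∪
            Set.range fun j : Fin i => mTerm 1 (V j)) := by
  classical
  have hfil : Finset.univ.filter (fun t : Fin k => 0 ≤ (t : ℕ)) = Finset.univ :=
    Finset.filter_true_of_mem fun _ _ => Nat.zero_le _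
  have hgen : genSet cI SI 0 (fun j => j.elim0) = Set.range fun t => mTerm (cI t) (SI t) := by
    unfold genSet
    have : (Set.range fun j : Fin 0 =>
        mTerm 1 ((fun j : Fin 0 => (Fin.elim0 j : Multiset (Fin n → F))) j))
        = (∅ : Set (MvPolynomial (Fin n) F)) := Set.range_eq_empty _
    rw [this, Set.union_empty]
  have h0 : (∑ t ∈ Finset.univ.filter (fun t : Fin k => 0 ≤ (t : ℕ)), circTerm (c t) (ℓ t))
      ∉ Ideal.span (genSet cI SI 0 (fun j => j.elim0)) := by
    rw [hfil, hgen]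
    exact hC
  exact step_main cI SI c ℓ hc k 0 (Nat.zero_le k) (fun j => j.elim0) (by omega)
    (fun j => j.elim0) h0

end SGPaper
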